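/- Sandwich monotonicity: define Φ_0 = Q_0 = 0, Φ_{i+1}(x,u) = R(x,u) + γ Φ_i(f(x,u), π_{i+1}(f(x,u))) where π_{i+1} is the greedy policy for Q_{i+1}, and Q_{i+1}(x,u) = R(x,u) + γ inf_{u'} Q_i(f(x,u),u'). Then Q_i(x,u) ≤ Φ_i(x,u) ≤ Q_{i+1}(x,u) for all i. -/
import Mathlib


/-- Sandwich monotonicity of value iteration: with `Φ₀ = Q₀ = 0`,
`Φ_{i+1}(x,u) = R(x,u) + γ Φ_i(f(x,u), π_{i+1}(f(x,u)))` where `π_{i+1}` is greedy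
for `Q_{i+1}`, we have `Q_i ≤ Φ_i ≤ Q_{i+1}` pointwise. -/
theorem value_iteration_sandwich {X U : Type*} [Nonempty U]
    (f : X → U → X) (R : X → U → ℝ) (γ : ℝ)
    (hγ : 0 < γ ∧ γ < 1) (hR : ∀ x u, 0 ≤ R x u)
    (Q Φ : ℕ → X → U → ℝ) (π : ℕ → X → U)
    (hQ0 : ∀ x u, Q 0 x u = 0)
    (hQrec : ∀ i x u, Q (i + 1) x u = R x u + γ * ⨅ u' : U, Q i (f x u) u')
    (hgreedy : ∀ i x, Q i x (π i x) = ⨅ u : U, Q i x u)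
    (hΦ0 : ∀ x u, Φ 0 x u = 0)
    (hΦrec : ∀ i x u, Φ (i + 1) x u = R x u + γ * Φ i (f x u) (π (i + 1) (f x u))) :
    ∀ i x u, Q i x u ≤ Φ i x u ∧ Φ i x u ≤ Q (i + 1) x u := by
  obtain ⟨hγ0, hγ1⟩ := hγ
  -- nonnegativity of Q
  have hQnn : ∀ i x u, 0 ≤ Q i x u := by
    intro i
    induction i with
    | zero => intro x u; rw [hQ0]
    | succ i ih =>
      intro x u
      rw [hQrec]
      have : (0:ℝ) ≤ ⨅ u' : U, Q i (f x u) u' :=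
        Real.iInf_nonneg fun u' => ih (f x u) u'
      have := hR x u
      nlinarith
  have hbdd : ∀ i x, BddBelow (Set.range (Q i x)) := fun i x =>
    ⟨0, fun y ⟨u, hu⟩ => hu ▸ hQnn i x u⟩
  intro i
  induction i with
  | zero =>
    intro x u
    constructor
    · rw [hQ0, hΦ0]
    · rw [hΦ0, hQrec]
      have h0 : (⨅ u' : U, Q 0 (f x u) u') = 0 := by
        simp [hQ0]
      rw [h0]
      have := hR x u
      linarith
  | succ i ih =>
    intro x u
    set y := f x u with hy
    constructor
    · rw [hQrec, hΦrec]
      have h1 : (⨅ u' : U, Q i y u') ≤ Q i y (π (i + 1) y) := ciInf_le (hbdd i y) _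
      have h2 : Q i y (π (i + 1) y) ≤ Φ i y (π (i + 1) y) := (ih y _).1
      nlinarith
    · rw [hΦrec, hQrec]
      have h2 : Φ i y (π (i + 1) y) ≤ Q (i + 1) y (π (i + 1) y) := (ih y _).2
      rw [hgreedy] at h2
      nlinarith
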